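/- arXiv:1411.4174 — 2 statements merged into one kernel-verified Lean document; each statement's English description precedes it below -/
import Mathlib

section
/- For b in the closed unit ball of H^∞ with b not constantly 1, the function S^*b, i.e. z ↦ (b(z) - b(0))/z, belongs to the de Branges–Rovnyak space ℋ(b). -/
/-!
`ℋ(b)` is the range of the self-adjoint `D_b` with `D_b² = 1 - T_b T_b⋆`, so by Hahn–Banach and
Riesz, `f ∈ ℋ(b)` as soon as `|⟪f, g⟫| ≤ ‖D_b g‖` for all `g`. For `f = S⋆b = S⋆T_b 1` one has
`⟪f, g⟫ = (T_b⋆ S g)(0)`. Since `‖u‖² = |u(0)|² + ‖S⋆u‖²`, `S⋆T_b⋆S = T_b⋆` and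
`‖T_b⋆x‖² = ‖x‖² - ‖D_b x‖²`, this gives `|⟪f, g⟫|² = ‖D_b g‖² - ‖D_b S g‖² ≤ ‖D_b g‖²`.
-/

noncomputable section

open ContinuousLinearMap

/-- The Hardy space `H²` of the unit disc, realized as the Hilbert space of square-summable
Taylor-coefficient sequences. -/
abbrev H2 : Type := lp (fun _ : ℕ => ℂ) 2

/-- The value at `z` (for `z` in the unit disc) of the analytic function whose sequence of
Taylor coefficients is `f ∈ H²`. -/
def H2eval (f : H2) (z : ℂ) : ℂ := ∑' n : ℕ, f n * z ^ n

/-- `b` belongs to the closed unit ball of `H^∞`: it is analytic and bounded by `1` on the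
open unit disc. -/
def InUnitBallHinf (b : ℂ → ℂ) : Prop :=
  DifferentiableOn ℂ b (Metric.ball 0 1) ∧ ∀ z ∈ Metric.ball (0 : ℂ) 1, ‖b z‖ ≤ 1

/-- `T` is the analytic Toeplitz operator `T_b` on `H²`, i.e. the operator of multiplication
by `b`. -/
def IsMulOp (b : ℂ → ℂ) (T : H2 →L[ℂ] H2) : Prop :=
  ∀ (f : H2), ∀ z ∈ Metric.ball (0 : ℂ) 1, H2eval (T f) z = b z * H2eval f z

/-- The norm of `h` in the operator-range space `M(T)` (the range of `T` with the inner
product making `T` a unitary from `(ker T)^⊥` onto it): the infimum (in fact the minimum) of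
the norms of the `T`-preimages of `h`. -/
def rangeNorm (T : H2 →L[ℂ] H2) (h : H2) : ℝ :=
  sInf {r : ℝ | ∃ ξ : H2, T ξ = h ∧ ‖ξ‖ = r}

open scoped InnerProductSpace

section HilbertSpace

variable {𝕜 E : Type*} [RCLike 𝕜] [NormedAddCommGroup E] [InnerProductSpace 𝕜 E] [CompleteSpace E]

theorem ContinuousLinearMap.mem_range_adjoint_of_norm_inner_le (D : E →L[𝕜] E) {f : E}
    (hf : ∀ g, ‖⟪f, g⟫_𝕜‖ ≤ ‖D g‖) : f ∈ Set.range (adjoint D) := by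
  let D' : E →ₗ[𝕜] E := D
  have hker : LinearMap.ker D' ≤ LinearMap.ker (innerₛₗ 𝕜 f) := fun g hg =>
    norm_le_zero_iff.mp <| by simpa [D', show D g = 0 from hg] using hf g
  -- `D g ↦ ⟪f, g⟫` is well defined on the range of `D` and bounded by `1` there
  let φ₀ : LinearMap.range D' →ₗ[𝕜] 𝕜 :=
    (LinearMap.ker D').liftQ (innerₛₗ 𝕜 f) hker ∘ₗ D'.quotKerEquivRange.symm.toLinearMap
  have hφ₀ : ∀ g (hg : D' g ∈ LinearMap.range D'), φ₀ ⟨D' g, hg⟩ = ⟪f, g⟫_𝕜 := fun g hg => by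
    simp [φ₀, LinearMap.quotKerEquivRange_symm_apply_image]
  let φ := φ₀.mkContinuous 1 fun x => by
    obtain ⟨g, hg⟩ := x.2
    have hx : x = ⟨D' g, LinearMap.mem_range_self D' g⟩ := Subtype.ext hg.symm
    rw [hx, hφ₀, one_mul]
    exact hf g
  obtain ⟨ψ, hψ, -⟩ := exists_extension_norm_eq _ φ
  refine ⟨(InnerProductSpace.toDual 𝕜 E).symm ψ, ext_inner_right 𝕜 fun g => ?_⟩
  rw [adjoint_inner_left, InnerProductSpace.toDual_symm_apply]
  exact (hψ ⟨D' g, LinearMap.mem_range_self D' g⟩).trans (hφ₀ g _)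

theorem IsSelfAdjoint.mem_range_of_norm_inner_le {D : E →L[𝕜] E} (hD : IsSelfAdjoint D) {f : E}
    (hf : ∀ g, ‖⟪f, g⟫_𝕜‖ ≤ ‖D g‖) : f ∈ Set.range D :=
  hD.adjoint_eq ▸ D.mem_range_adjoint_of_norm_inner_le hf

variable {T D : E →L[𝕜] E}

theorem norm_sq_add_norm_adjoint_sq_of_sq_eq (hD : IsSelfAdjoint D)
    (hDT : D ∘L D = 1 - T ∘L adjoint T) (x : E) : ‖D x‖ ^ 2 + ‖adjoint T x‖ ^ 2 = ‖x‖ ^ 2 := by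
  rw [apply_norm_sq_eq_inner_adjoint_left, apply_norm_sq_eq_inner_adjoint_left, hD.adjoint_eq,
    hDT, adjoint_adjoint, ← map_add, ← inner_add_left, ← add_apply, sub_add_cancel,
    one_apply_eq_self, inner_self_eq_norm_sq]

theorem IsSelfAdjoint.apply_mem_range_of_commute (hD : IsSelfAdjoint D)
    (hDT : D ∘L D = 1 - T ∘L adjoint T) {B : E →L[𝕜] E} (hB : B ∘L adjoint B = 1)
    (hTB : T ∘L adjoint B = adjoint B ∘L T) {e : E}
    (he : ∀ u, ‖u‖ ^ 2 = ‖⟪e, u⟫_𝕜‖ ^ 2 + ‖B u‖ ^ 2) : B (T e) ∈ Set.range D := by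
  refine hD.mem_range_of_norm_inner_le fun g => ?_
  have hcomm : B (adjoint T (adjoint B g)) = adjoint T g := by
    have h := congrArg (fun A => adjoint A (adjoint B g)) hTB
    simp only [adjoint_comp, adjoint_adjoint, comp_apply] at h
    rw [h, ← comp_apply B, hB, one_apply_eq_self]
  have hinner : ⟪B (T e), g⟫_𝕜 = ⟪e, adjoint T (adjoint B g)⟫_𝕜 := by
    rw [← adjoint_inner_right, ← adjoint_inner_right]
  have hsq : ‖⟪e, adjoint T (adjoint B g)⟫_𝕜‖ ^ 2 = ‖D g‖ ^ 2 - ‖D (adjoint B g)‖ ^ 2 := by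
    have h₁ := he (adjoint T (adjoint B g))
    have h₂ := norm_sq_add_norm_adjoint_sq_of_sq_eq hD hDT (adjoint B g)
    have h₃ := norm_sq_add_norm_adjoint_sq_of_sq_eq hD hDT g
    rw [hcomm] at h₁
    rw [(adjoint B).norm_map_iff_adjoint_comp_self.mpr (by rwa [adjoint_adjoint])] at h₂
    linarith
  rw [hinner, ← pow_le_pow_iff_left₀ (norm_nonneg _) (norm_nonneg _) two_ne_zero, hsq]
  exact sub_le_self _ (sq_nonneg _)

end HilbertSpace

namespace H2

theorem summable_eval (f : H2) {z : ℂ} (hz : ‖z‖ < 1) : Summable fun n => f n * z ^ n :=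
  .of_norm_bounded ((summable_geometric_of_lt_one (norm_nonneg z) hz).mul_left ‖f‖) fun n => by
    rw [norm_mul, norm_pow]
    exact mul_le_mul_of_nonneg_right (lp.norm_apply_le_norm two_ne_zero f n) (by positivity)

theorem hasFPowerSeriesOnBall_eval (f : H2) :
    HasFPowerSeriesOnBall (H2eval f) (.ofScalars ℂ fun n => f n) 0 1 where
  r_le := FormalMultilinearSeries.le_radius_of_bound _ ‖f‖ fun n => by
    simpa using lp.norm_apply_le_norm two_ne_zero f n
  r_pos := one_pos
  hasSum {y} hy := by
    replace hy : ‖y‖ < 1 := by simpa [← ofReal_norm] using mem_eball_zero_iff.mp hy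
    simpa [FormalMultilinearSeries.ofScalars_apply_eq, mul_comm, H2eval] using
      (summable_eval f hy).hasSum

theorem eq_of_eval_eq {f g : H2} (h : ∀ z ∈ Metric.ball (0 : ℂ) 1, H2eval f z = H2eval g z) :
    f = g := by
  have hfg := (hasFPowerSeriesOnBall_eval f).hasFPowerSeriesAt
    |>.eq_formalMultilinearSeries_of_eventually (hasFPowerSeriesOnBall_eval g).hasFPowerSeriesAt
    (Filter.eventuallyEq_of_mem (Metric.ball_mem_nhds 0 one_pos) h)
  ext n
  exact congrFun (FormalMultilinearSeries.ofScalars_series_injective ℂ ℂ hfg) n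

theorem eval_single_zero_one (z : ℂ) : H2eval (lp.single 2 0 1) z = 1 := by
  rw [H2eval, tsum_eq_single 0 fun n hn => by simp [lp.single_apply, hn]]
  simp [lp.single_apply]

section BackwardShift

variable {B : H2 →L[ℂ] H2}

theorem apply_eq_inner_single (f : H2) (n : ℕ) : f n = ⟪lp.single 2 n 1, f⟫_ℂ := by
  simp [lp.inner_single_left]

theorem backwardShift_single_zero (hB : ∀ f n, B f n = f (n + 1)) : B (lp.single 2 0 1) = 0 := by
  ext n
  simp [hB, lp.single_apply]

theorem backwardShift_single_succ (hB : ∀ f n, B f n = f (n + 1)) (n : ℕ) :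
    B (lp.single 2 (n + 1) 1) = lp.single 2 n 1 := by
  ext m
  simp [hB, lp.single_apply, Pi.single_apply]

theorem adjoint_backwardShift_apply_zero (hB : ∀ f n, B f n = f (n + 1)) (g : H2) :
    adjoint B g 0 = 0 := by
  rw [apply_eq_inner_single, adjoint_inner_right, backwardShift_single_zero hB, inner_zero_left]

theorem adjoint_backwardShift_apply_succ (hB : ∀ f n, B f n = f (n + 1)) (g : H2) (n : ℕ) :
    adjoint B g (n + 1) = g n := by
  rw [apply_eq_inner_single, adjoint_inner_right, backwardShift_single_succ hB,
    ← apply_eq_inner_single]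

theorem backwardShift_comp_adjoint (hB : ∀ f n, B f n = f (n + 1)) : B ∘L adjoint B = 1 := by
  ext1 g
  ext n
  rw [comp_apply, hB, adjoint_backwardShift_apply_succ hB, one_apply_eq_self]

theorem eval_adjoint_backwardShift (hB : ∀ f n, B f n = f (n + 1)) (g : H2) {z : ℂ}
    (hz : ‖z‖ < 1) : H2eval (adjoint B g) z = z * H2eval g z := by
  rw [H2eval, (summable_eval _ hz).tsum_eq_zero_add, H2eval, ← tsum_mul_left]
  simp only [adjoint_backwardShift_apply_zero hB, adjoint_backwardShift_apply_succ hB, zero_mul,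
    zero_add, pow_succ]
  exact tsum_congr fun n => by ring

theorem norm_sq_eq_add_backwardShift (hB : ∀ f n, B f n = f (n + 1)) (u : H2) :
    ‖u‖ ^ 2 = ‖⟪lp.single 2 0 1, u⟫_ℂ‖ ^ 2 + ‖B u‖ ^ 2 := by
  have h : ⟪u, u⟫_ℂ = ⟪u 0, u 0⟫_ℂ + ⟪B u, B u⟫_ℂ := by
    rw [lp.inner_eq_tsum, lp.inner_eq_tsum,
      Summable.tsum_eq_zero_add (f := fun n => ⟪u n, u n⟫_ℂ) (lp.summable_inner u u)]
    simp only [hB]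
  rw [← apply_eq_inner_single]
  simp only [inner_self_eq_norm_sq_to_K] at h
  exact_mod_cast h

end BackwardShift

end H2

theorem stmt14_general (b : ℂ → ℂ)
    (Tb : H2 →L[ℂ] H2) (hTb : IsMulOp b Tb)
    (bseq : H2) (hbseq : ∀ z ∈ Metric.ball (0 : ℂ) 1, H2eval bseq z = b z)
    (Sstar : H2 →L[ℂ] H2) (hSstar : ∀ (f : H2) (n : ℕ), Sstar f n = f (n + 1))
    (Db : H2 →L[ℂ] H2) (hDb_pos : Db.IsPositive)
    (hDb_sq : Db ∘L Db = 1 - Tb ∘L adjoint Tb) :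
    Sstar bseq ∈ Set.range Db := by
  have hTb_one : Tb (lp.single 2 0 1) = bseq := H2.eq_of_eval_eq fun z hz => by
    rw [hTb _ z hz, H2.eval_single_zero_one, hbseq z hz, mul_one]
  have hTb_shift : Tb ∘L adjoint Sstar = adjoint Sstar ∘L Tb := by
    ext1 f
    refine H2.eq_of_eval_eq fun z hz => ?_
    have hz' : ‖z‖ < 1 := mem_ball_zero_iff.mp hz
    rw [comp_apply, comp_apply, hTb _ z hz, H2.eval_adjoint_backwardShift hSstar _ hz',
      H2.eval_adjoint_backwardShift hSstar _ hz', hTb _ z hz, mul_left_comm]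
  rw [← hTb_one]
  exact hDb_pos.isSelfAdjoint.apply_mem_range_of_commute hDb_sq
    (H2.backwardShift_comp_adjoint hSstar) hTb_shift (H2.norm_sq_eq_add_backwardShift hSstar)

/-- For `b` in the closed unit ball of `H^∞` with `b` not constantly `1`,
the function `S^*b : z ↦ (b(z) - b(0))/z` belongs to the de Branges–Rovnyak space `ℋ(b)`,
the range of `D_b = (I - T_b T_{b̄})^{1/2}`.  In the coefficient model the backward shift
`S^*` acts by `(S^*f) n = f (n+1)`, and `bseq ∈ H²` is the coefficient sequence of `b`. -/
theorem stmt14 (b : ℂ → ℂ) (hb : InUnitBallHinf b)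
    (hb1 : ¬ ∀ z ∈ Metric.ball (0 : ℂ) 1, b z = 1)
    (Tb : H2 →L[ℂ] H2) (hTb : IsMulOp b Tb)
    (bseq : H2) (hbseq : ∀ z ∈ Metric.ball (0 : ℂ) 1, H2eval bseq z = b z)
    (Sstar : H2 →L[ℂ] H2) (hSstar : ∀ (f : H2) (n : ℕ), Sstar f n = f (n + 1))
    (Db : H2 →L[ℂ] H2) (hDb_pos : Db.IsPositive)
    (hDb_sq : Db ∘L Db = 1 - Tb ∘L adjoint Tb) :
    Sstar bseq ∈ Set.range Db :=
  stmt14_general b Tb hTb bseq hbseq Sstar hSstar Db hDb_pos hDb_sq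
end
end

section
/- Let b be in the closed unit ball of H^∞, X_b = S^*|_{ℋ(b)}, and λ ∈ 𝔻. Then (I - λ X_b)^{-1}(S^*b) is the function z ↦ (b(z) - b(λ))/(z - λ); in particular all these difference quotients belong to ℋ(b). -/
noncomputable section

open ContinuousLinearMap

/-! The resolvent `g = ∑ λⁿ (S^*)ⁿ S^*b` solves `(I - λ S^*) g = S^*b`, and comparing Taylor
coefficients gives `(z - λ) g(z) = b(z) - b(λ)`. For `g ∈ ℋ(b) = range D_b`: the commutation
relation `S^* T_b = T_b S^* + S^*b ⊗ 1` and `D_b² = I - T_b T_b^*` give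
`‖D_b S x‖² = ‖D_b x‖² - |⟨S^*b, x⟩|²`, with `S` the forward shift. Hence
`|⟨(S^*)ⁿ S^*b, x⟩| ≤ ‖D_b x‖` for every `n`, so `|⟨g, x⟩| ≤ ‖D_b x‖ / (1 - |λ|)`, and a
vector whose pairings are dominated by `‖D x‖` lies in the range of `D^* = D`. -/

open InnerProductSpace Filter Topology

section

variable {𝕜 E F : Type*} [RCLike 𝕜] [NormedAddCommGroup E] [InnerProductSpace 𝕜 E]
  [CompleteSpace E] [NormedAddCommGroup F] [InnerProductSpace 𝕜 F] [CompleteSpace F]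

/- `T x ↦ ⟪h, x⟫` is a well-defined bounded functional on the range of `T`; extend it by
Hahn–Banach and represent it by Riesz. -/
theorem mem_range_adjoint_of_norm_inner_le (T : E →L[𝕜] F) {h : E} {c : ℝ}
    (hc : ∀ x, ‖inner 𝕜 h x‖ ≤ c * ‖T x‖) : h ∈ Set.range (adjoint T) := by
  let φ : E →ₗ[𝕜] 𝕜 := innerₛₗ 𝕜 h
  have hker : LinearMap.ker (T : E →ₗ[𝕜] F) ≤ LinearMap.ker φ := fun x hx => by
    simpa [φ, show T x = 0 from hx] using hc x
  let ψ : LinearMap.range (T : E →ₗ[𝕜] F) →ₗ[𝕜] 𝕜 :=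
    (LinearMap.ker _).liftQ φ hker ∘ₗ (T : E →ₗ[𝕜] F).quotKerEquivRange.symm.toLinearMap
  have hψ (x : E) :
      ψ ⟨T x, LinearMap.mem_range_self (T : E →ₗ[𝕜] F) x⟩ = inner 𝕜 h x := by
    change (LinearMap.ker _).liftQ φ hker ((T : E →ₗ[𝕜] F).quotKerEquivRange.symm
      ⟨(T : E →ₗ[𝕜] F) x, _⟩) = _
    rw [LinearMap.quotKerEquivRange_symm_apply_image, Submodule.mkQ_apply, Submodule.liftQ_apply]
    rfl
  obtain ⟨Φ, hΦ, -⟩ := exists_extension_norm_eq _ <| ψ.mkContinuous c <| by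
    rintro ⟨_, x, rfl⟩
    simpa [hψ] using hc x
  refine ⟨(toDual 𝕜 F).symm Φ, ext_inner_right 𝕜 fun x => ?_⟩
  rw [adjoint_inner_left, toDual_symm_apply, ← hψ x]
  exact hΦ ⟨T x, LinearMap.mem_range_self (T : E →ₗ[𝕜] F) x⟩

theorem norm_sq_apply_of_comp_self_eq_one_sub {D T : E →L[𝕜] E} (hD : IsSelfAdjoint D)
    (hDT : D ∘L D = 1 - T ∘L adjoint T) (x : E) :
    ‖D x‖ ^ 2 = ‖x‖ ^ 2 - ‖adjoint T x‖ ^ 2 := by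
  rw [apply_norm_sq_eq_inner_adjoint_left, apply_norm_sq_eq_inner_adjoint_left, hD.adjoint_eq,
    hDT, adjoint_adjoint, sub_apply, inner_sub_left, map_sub, one_apply_eq_self,
    ← inner_self_eq_norm_sq (𝕜 := 𝕜) x]

end

theorem summable_coeff_mul_pow (f : H2) {z : ℂ} (hz : ‖z‖ < 1) :
    Summable fun n => f n * z ^ n := by
  refine .of_norm_bounded ((summable_geometric_of_lt_one (norm_nonneg z) hz).mul_left ‖f‖)
    fun n => ?_
  rw [norm_mul, norm_pow]
  exact mul_le_mul_of_nonneg_right (lp.norm_apply_le_norm two_ne_zero f n) (by positivity)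

theorem h2eval_add (f g : H2) {z : ℂ} (hz : ‖z‖ < 1) :
    H2eval (f + g) z = H2eval f z + H2eval g z := by
  simp only [H2eval, lp.coeFn_add, Pi.add_apply, add_mul]
  exact (summable_coeff_mul_pow f hz).tsum_add (summable_coeff_mul_pow g hz)

theorem h2eval_sub (f g : H2) {z : ℂ} (hz : ‖z‖ < 1) :
    H2eval (f - g) z = H2eval f z - H2eval g z := by
  simp only [H2eval, lp.coeFn_sub, Pi.sub_apply, sub_mul]
  exact (summable_coeff_mul_pow f hz).tsum_sub (summable_coeff_mul_pow g hz)

theorem h2eval_smul (c : ℂ) (f : H2) (z : ℂ) : H2eval (c • f) z = c * H2eval f z := by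
  simp only [H2eval, lp.coeFn_smul, Pi.smul_apply, smul_eq_mul, mul_assoc]
  exact tsum_mul_left

theorem h2eval_zero_right (f : H2) : H2eval f 0 = f 0 := by
  rw [H2eval, tsum_eq_single 0 fun n hn => by simp [zero_pow hn]]
  simp

theorem h2eval_eq_add_mul (f g : H2) (hg : ∀ n, g n = f (n + 1)) {z : ℂ} (hz : ‖z‖ < 1) :
    H2eval f z = f 0 + z * H2eval g z := by
  rw [H2eval, (summable_coeff_mul_pow f hz).tsum_eq_zero_add, H2eval, ← tsum_mul_left]
  simp only [hg, pow_succ]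
  congr 1
  · ring
  · exact tsum_congr fun n => by ring

theorem continuousAt_h2eval_zero (f : H2) : ContinuousAt (H2eval f) 0 := by
  have hbound (n : ℕ) (z : ℂ) (hz : z ∈ Metric.closedBall 0 (1 / 2)) :
      ‖f n * z ^ n‖ ≤ ‖f‖ * (1 / 2) ^ n := by
    rw [norm_mul, norm_pow]
    exact mul_le_mul (lp.norm_apply_le_norm two_ne_zero f n)
      (pow_le_pow_left₀ (norm_nonneg z) (mem_closedBall_zero_iff.mp hz) n) (by positivity)
      (norm_nonneg f)
  exact (continuousOn_tsum (fun n => by fun_prop) (summable_geometric_two.mul_left ‖f‖)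
    hbound).continuousAt (Metric.closedBall_mem_nhds 0 (by norm_num))

theorem coeff_zero_eq_zero_of_h2eval_eq_zero (f : H2)
    (hf : ∀ z : ℂ, ‖z‖ < 1 → z ≠ 0 → H2eval f z = 0) : f 0 = 0 := by
  have hlim := ((continuousAt_h2eval_zero f).tendsto.mono_left nhdsWithin_le_nhds :
    Tendsto (H2eval f) (𝓝[≠] 0) (𝓝 (H2eval f 0)))
  have hzero : H2eval f =ᶠ[𝓝[≠] 0] 0 := by
    filter_upwards [self_mem_nhdsWithin,
      nhdsWithin_le_nhds (Metric.ball_mem_nhds (0 : ℂ) one_pos)] with z hz0 hz1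
    exact hf z (mem_ball_zero_iff.mp hz1) hz0
  rw [← h2eval_zero_right]
  exact tendsto_nhds_unique hlim (tendsto_const_nhds.congr' hzero.symm)

def IsBackwardShift (Sstar : H2 →L[ℂ] H2) : Prop :=
  ∀ (f : H2) (n : ℕ), Sstar f n = f (n + 1)

theorem IsBackwardShift.apply {Sstar : H2 →L[ℂ] H2} (hSstar : IsBackwardShift Sstar) (f : H2)
    (n : ℕ) : Sstar f n = f (n + 1) :=
  hSstar f n

def e₀ : H2 := lp.single 2 0 1

theorem inner_single_one_left (m : ℕ) (f : H2) : inner ℂ (lp.single 2 m (1 : ℂ)) f = f m := by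
  simp [lp.inner_single_left]

theorem inner_e₀_left (f : H2) : inner ℂ e₀ f = f 0 := inner_single_one_left 0 f

theorem norm_e₀ : ‖e₀‖ = 1 := by
  simp [e₀, lp.norm_single]

section BackwardShift

variable {Sstar : H2 →L[ℂ] H2}

theorem eq_zero_of_h2eval_eq_zero (hSstar : IsBackwardShift Sstar) {f : H2}
    (hf : ∀ z : ℂ, ‖z‖ < 1 → z ≠ 0 → H2eval f z = 0) : f = 0 := by
  refine lp.ext <| funext fun n => ?_
  induction n generalizing f with
  | zero => exact coeff_zero_eq_zero_of_h2eval_eq_zero f hf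
  | succ n ih =>
    have hshift (z : ℂ) (hz : ‖z‖ < 1) (hz0 : z ≠ 0) : H2eval (Sstar f) z = 0 := by
      have h := h2eval_eq_add_mul f (Sstar f) (hSstar f) hz
      rw [hf z hz hz0, coeff_zero_eq_zero_of_h2eval_eq_zero f hf, zero_add] at h
      exact (mul_eq_zero.mp h.symm).resolve_left hz0
    rw [← hSstar f n]
    exact ih hshift

theorem backward_shift_single_zero (hSstar : IsBackwardShift Sstar) :
    Sstar (lp.single 2 0 1) = 0 :=
  lp.ext <| funext fun n => by simp [hSstar.apply, lp.single_apply]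

theorem backward_shift_single_succ (hSstar : IsBackwardShift Sstar)
    (n : ℕ) : Sstar (lp.single 2 (n + 1) 1) = lp.single 2 n 1 :=
  lp.ext <| funext fun m => by simp [hSstar.apply, lp.single_apply, Pi.single_apply]

theorem adjoint_backward_shift_apply_zero
    (hSstar : IsBackwardShift Sstar) (w : H2) : adjoint Sstar w 0 = 0 := by
  rw [← inner_single_one_left, adjoint_inner_right, backward_shift_single_zero hSstar,
    inner_zero_left]

theorem adjoint_backward_shift_apply_succ
    (hSstar : IsBackwardShift Sstar) (w : H2) (m : ℕ) :
    adjoint Sstar w (m + 1) = w m := by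
  rw [← inner_single_one_left, adjoint_inner_right, backward_shift_single_succ hSstar,
    inner_single_one_left]

theorem norm_adjoint_backward_shift_apply
    (hSstar : IsBackwardShift Sstar) (w : H2) :
    ‖adjoint Sstar w‖ = ‖w‖ := by
  refine (norm_map_iff_adjoint_comp_self (adjoint Sstar)).mpr ?_ w
  rw [adjoint_adjoint]
  ext1 f
  exact lp.ext <| funext fun n => by
    simp [hSstar.apply, adjoint_backward_shift_apply_succ hSstar]

theorem norm_backward_shift_le (hSstar : IsBackwardShift Sstar) :
    ‖Sstar‖ ≤ 1 := by
  rw [← LinearIsometryEquiv.norm_map adjoint Sstar]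
  exact opNorm_le_bound _ zero_le_one fun w => by
    rw [one_mul, norm_adjoint_backward_shift_apply hSstar]

theorem norm_sq_adjoint_backward_shift_add_smul_e₀
    (hSstar : IsBackwardShift Sstar) (w : H2) (c : ℂ) :
    ‖adjoint Sstar w + c • e₀‖ ^ 2 = ‖w‖ ^ 2 + ‖c‖ ^ 2 := by
  have horth : inner ℂ (adjoint Sstar w) (c • e₀) = 0 := by
    rw [inner_smul_right, ← inner_conj_symm, inner_e₀_left,
      adjoint_backward_shift_apply_zero hSstar, map_zero, mul_zero]
  rw [sq, sq, sq, norm_add_sq_eq_norm_sq_add_norm_sq_of_inner_eq_zero _ _ horth, norm_smul,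
    norm_e₀, mul_one, norm_adjoint_backward_shift_apply hSstar]

theorem h2eval_eq_div_of_sub_smul_backward_shift_eq
    (hSstar : IsBackwardShift Sstar) {g h : H2} {lam : ℂ}
    (hg : g - lam • Sstar g = Sstar h) (hlam : ‖lam‖ < 1) {z : ℂ} (hz : ‖z‖ < 1)
    (hzl : z ≠ lam) : H2eval g z = (H2eval h z - H2eval h lam) / (z - lam) := by
  have key (w : ℂ) (hw : ‖w‖ < 1) :
      (w - lam) * H2eval g w + lam * g 0 = H2eval h w - h 0 := by
    have hgw := h2eval_eq_add_mul g _ (hSstar g) hw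
    have hhw := h2eval_eq_add_mul h _ (hSstar h) hw
    rw [← hg, h2eval_sub _ _ hw, h2eval_smul] at hhw
    linear_combination -hhw - lam * hgw
  rw [eq_div_iff (sub_ne_zero.mpr hzl)]
  linear_combination key z hz - key lam hlam

end BackwardShift

section Toeplitz

variable {Sstar T D : H2 →L[ℂ] H2}

theorem backward_shift_comp_mulOp (hSstar : IsBackwardShift Sstar)
    {b : ℂ → ℂ} (hT : IsMulOp b T) {bseq : H2}
    (hbseq : ∀ z ∈ Metric.ball (0 : ℂ) 1, H2eval bseq z = b z) :
    Sstar ∘L T = T ∘L Sstar + rankOne ℂ (Sstar bseq) e₀ := by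
  have h0 : (0 : ℂ) ∈ Metric.ball (0 : ℂ) 1 := Metric.mem_ball_self one_pos
  have hb0 : bseq 0 = b 0 := by rw [← h2eval_zero_right]; exact hbseq 0 h0
  have hT0 (f : H2) : T f 0 = b 0 * f 0 := by simpa only [h2eval_zero_right] using hT f 0 h0
  ext1 f
  rw [← sub_eq_zero]
  refine eq_zero_of_h2eval_eq_zero hSstar fun z hz hz0 => mul_left_cancel₀ hz0 ?_
  have hzb : z ∈ Metric.ball (0 : ℂ) 1 := mem_ball_zero_iff.mpr hz
  rw [comp_apply, add_apply, comp_apply, rankOne_apply, inner_e₀_left, h2eval_sub _ _ hz,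
    h2eval_add _ _ hz, h2eval_smul, hT _ z hzb, mul_zero]
  linear_combination hT f z hzb - hT0 f - h2eval_eq_add_mul (T f) _ (hSstar _) hz
    + b z * h2eval_eq_add_mul f _ (hSstar f) hz
    + f 0 * h2eval_eq_add_mul bseq _ (hSstar bseq) hz - f 0 * hbseq z hzb + f 0 * hb0

theorem norm_sq_defect_adjoint_backward_shift_apply
    (hSstar : IsBackwardShift Sstar) {e : H2}
    (hcomm : Sstar ∘L T = T ∘L Sstar + rankOne ℂ e e₀) (hD : IsSelfAdjoint D)
    (hDT : D ∘L D = 1 - T ∘L adjoint T) (x : H2) :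
    ‖D (adjoint Sstar x)‖ ^ 2 = ‖D x‖ ^ 2 - ‖inner ℂ e x‖ ^ 2 := by
  have hadj :
      adjoint T (adjoint Sstar x) = adjoint Sstar (adjoint T x) + inner ℂ e x • e₀ := by
    simpa [adjoint_comp] using congrArg (fun A => adjoint A x) hcomm
  rw [norm_sq_apply_of_comp_self_eq_one_sub hD hDT, norm_sq_apply_of_comp_self_eq_one_sub hD hDT,
    hadj, norm_sq_adjoint_backward_shift_add_smul_e₀ hSstar,
    norm_adjoint_backward_shift_apply hSstar]
  ring

theorem norm_inner_backward_shift_pow_le (hSstar : IsBackwardShift Sstar)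
    {e : H2} (hcomm : Sstar ∘L T = T ∘L Sstar + rankOne ℂ e e₀) (hD : IsSelfAdjoint D)
    (hDT : D ∘L D = 1 - T ∘L adjoint T) (n : ℕ) (x : H2) :
    ‖inner ℂ ((Sstar ^ n) e) x‖ ≤ ‖D x‖ := by
  have hsq := norm_sq_defect_adjoint_backward_shift_apply hSstar hcomm hD hDT
  have hinner (x : H2) : ‖inner ℂ e x‖ ≤ ‖D x‖ :=
    (pow_le_pow_iff_left₀ (norm_nonneg _) (norm_nonneg _) two_ne_zero).mp
      (by nlinarith [hsq x, sq_nonneg ‖D (adjoint Sstar x)‖])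
  have hshift (x : H2) : ‖D (adjoint Sstar x)‖ ≤ ‖D x‖ :=
    (pow_le_pow_iff_left₀ (norm_nonneg _) (norm_nonneg _) two_ne_zero).mp
      (by nlinarith [hsq x, sq_nonneg ‖inner ℂ e x‖])
  induction n generalizing x with
  | zero => simpa using hinner x
  | succ n ih =>
    rw [pow_succ', mul_apply_eq_comp, ← adjoint_inner_right]
    exact (ih _).trans (hshift x)

theorem norm_smul_backward_shift_lt_one (hSstar : IsBackwardShift Sstar)
    {lam : ℂ} (hlam : ‖lam‖ < 1) : ‖lam • Sstar‖ < 1 :=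
  (norm_smul_le lam Sstar).trans_lt <|
    mul_lt_one_of_nonneg_of_lt_one_left (norm_nonneg lam) hlam (norm_backward_shift_le hSstar)

theorem norm_inner_resolvent_backward_shift_le
    (hSstar : IsBackwardShift Sstar) {e : H2}
    (hcomm : Sstar ∘L T = T ∘L Sstar + rankOne ℂ e e₀) (hD : IsSelfAdjoint D)
    (hDT : D ∘L D = 1 - T ∘L adjoint T) {lam : ℂ} (hlam : ‖lam‖ < 1) (x : H2) :
    ‖inner ℂ ((∑' n, (lam • Sstar) ^ n) e) x‖ ≤ (1 - ‖lam‖)⁻¹ * ‖D x‖ := by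
  have hsum : HasSum (fun n => inner ℂ x (((lam • Sstar) ^ n) e))
      (inner ℂ x ((∑' n, (lam • Sstar) ^ n) e)) :=
    (((summable_geometric_of_norm_lt_one <|
      norm_smul_backward_shift_lt_one hSstar hlam).hasSum.mapL (apply ℂ H2 e)).mapL
      (innerSL ℂ x))
  rw [norm_inner_symm]
  refine hsum.norm_le_of_bounded
    ((hasSum_geometric_of_lt_one (norm_nonneg lam) hlam).mul_right ‖D x‖) fun n => ?_
  rw [smul_pow, smul_apply, inner_smul_right, norm_mul, norm_pow, norm_inner_symm]
  exact mul_le_mul_of_nonneg_left (norm_inner_backward_shift_pow_le hSstar hcomm hD hDT n x)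
    (by positivity)

end Toeplitz

theorem stmt15_general (b : ℂ → ℂ)
    (Tb : H2 →L[ℂ] H2) (hTb : IsMulOp b Tb)
    (bseq : H2) (hbseq : ∀ z ∈ Metric.ball (0 : ℂ) 1, H2eval bseq z = b z)
    (Sstar : H2 →L[ℂ] H2) (hSstar : ∀ (f : H2) (n : ℕ), Sstar f n = f (n + 1))
    (Db : H2 →L[ℂ] H2) (hDb_pos : Db.IsPositive)
    (hDb_sq : Db ∘L Db = 1 - Tb ∘L adjoint Tb)
    (lam : ℂ) (hlam : lam ∈ Metric.ball (0 : ℂ) 1) :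
    ∃ g : H2,
      (∀ z ∈ Metric.ball (0 : ℂ) 1, z ≠ lam →
        H2eval g z = (b z - b lam) / (z - lam)) ∧
      g - lam • Sstar g = Sstar bseq ∧
      g ∈ Set.range Db := by
  have hlam_norm : ‖lam‖ < 1 := mem_ball_zero_iff.mp hlam
  have hcomm := backward_shift_comp_mulOp hSstar hTb hbseq
  have hDb : IsSelfAdjoint Db := hDb_pos.isSelfAdjoint
  set g := (∑' n, (lam • Sstar) ^ n) (Sstar bseq)
  have hresolvent : g - lam • Sstar g = Sstar bseq := by
    simpa using congrArg (· (Sstar bseq))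
      (mul_neg_geom_series _ (norm_smul_backward_shift_lt_one hSstar hlam_norm))
  refine ⟨g, fun z hz hzl => ?_, hresolvent, ?_⟩
  · rw [h2eval_eq_div_of_sub_smul_backward_shift_eq hSstar hresolvent hlam_norm
      (mem_ball_zero_iff.mp hz) hzl, hbseq z hz, hbseq lam hlam]
  · rw [← hDb.adjoint_eq]
    exact mem_range_adjoint_of_norm_inner_le Db
      (norm_inner_resolvent_backward_shift_le hSstar hcomm hDb hDb_sq hlam_norm)

/-- Let `b` be in the closed unit ball of `H^∞`, `X_b = S^*|_{ℋ(b)}`, and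
`λ ∈ 𝔻`.  Then `(I - λ X_b)^{-1}(S^*b)` is the function `z ↦ (b(z) - b(λ))/(z - λ)`; in
particular these difference quotients belong to `ℋ(b)` (the range of
`D_b = (I - T_b T_{b̄})^{1/2}`).  This is expressed by: there is `g ∈ ℋ(b)` representing the
difference quotient with `(I - λ S^*) g = S^* b`. -/
theorem stmt15 (b : ℂ → ℂ) (hb : InUnitBallHinf b)
    (Tb : H2 →L[ℂ] H2) (hTb : IsMulOp b Tb)
    (bseq : H2) (hbseq : ∀ z ∈ Metric.ball (0 : ℂ) 1, H2eval bseq z = b z)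
    (Sstar : H2 →L[ℂ] H2) (hSstar : ∀ (f : H2) (n : ℕ), Sstar f n = f (n + 1))
    (Db : H2 →L[ℂ] H2) (hDb_pos : Db.IsPositive)
    (hDb_sq : Db ∘L Db = 1 - Tb ∘L adjoint Tb)
    (lam : ℂ) (hlam : lam ∈ Metric.ball (0 : ℂ) 1) :
    ∃ g : H2,
      (∀ z ∈ Metric.ball (0 : ℂ) 1, z ≠ lam →
        H2eval g z = (b z - b lam) / (z - lam)) ∧
      g - lam • Sstar g = Sstar bseq ∧
      g ∈ Set.range Db :=
  stmt15_general b Tb hTb bseq hbseq Sstar hSstar Db hDb_pos hDb_sq lam hlam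
end
end
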